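/- Let Σ be a symmetric block matrix whose diagonal blocks Σ_{i,i} are symmetric positive definite, and suppose Σ is block strictly diagonally dominant in the spectral norm: ‖Σ_{i,i}^{-1}‖^{-1} > ∑_{k≠i}‖Σ_{i,k}‖ for all i. Then every eigenvalue λ of Σ satisfies λ > 0; more precisely, for each eigenvalue λ there is an index i and an eigenvalue σ of Σ_{i,i} with |σ − λ| < σ_min(Σ_{i,i}), where σ_min denotes the smallest eigenvalue of Σ_{i,i}. -/

import Mathlib

/-!
Block Gershgorin argument. Let `v` be a real eigenvector of `Σ` for `λ` and `i` a block on which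
`‖v_i‖` is largest. The `i`-th block row of `Σ v = λ v` gives
`‖(Σ_ii - λ) v_i‖ ≤ ∑_{k ≠ i} ‖Σ_ik‖ ‖v_k‖ ≤ (∑_{k ≠ i} ‖Σ_ik‖) ‖v_i‖ < ‖Σ_ii⁻¹‖⁻¹ ‖v_i‖`,
and `‖Σ_ii⁻¹‖⁻¹ ≤ λ_min(Σ_ii)`. Expanding in an orthonormal eigenbasis of the symmetric `Σ_ii`,
`‖(Σ_ii - λ) x‖ ≥ min_σ |σ - λ| ‖x‖`, so some eigenvalue `σ` of `Σ_ii` satisfies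
`|σ - λ| < λ_min(Σ_ii) ≤ σ`, whence `λ > 0`.
-/

open Matrix Finset MeasureTheory Real

noncomputable def specNorm {d : ℕ} (A : Matrix (Fin d) (Fin d) ℝ) : ℝ :=
  ‖(Matrix.toEuclideanLin A).toContinuousLinearMap‖

noncomputable def specNormC {d : ℕ} (A : Matrix (Fin d) (Fin d) ℂ) : ℝ :=
  ‖(Matrix.toEuclideanLin A).toContinuousLinearMap‖

/-- The `(i,j)` block of a blocked matrix. -/
def blk {𝕜 : Type*} {n d : ℕ} (S : Matrix (Fin n × Fin d) (Fin n × Fin d) 𝕜) (i j : Fin n) :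
    Matrix (Fin d) (Fin d) 𝕜 := fun a b => S (i, a) (j, b)

/-- Smallest real eigenvalue (as the infimum of the real spectrum). -/
noncomputable def lamMin {m : Type*} [Fintype m] [DecidableEq m]
    (A : Matrix m m ℝ) : ℝ := sInf (spectrum ℝ A)

/-- Smallest real eigenvalue of a complex matrix. -/
noncomputable def lamMinC {m : Type*} [Fintype m] [DecidableEq m]
    (A : Matrix m m ℂ) : ℝ := sInf {x : ℝ | (x : ℂ) ∈ spectrum ℂ A}

open scoped RealInnerProductSpace in
theorem Matrix.IsHermitian.mul_norm_le_norm_sub_smul {m : Type*} [Fintype m] [DecidableEq m]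
    {A : Matrix m m ℝ} (hA : A.IsHermitian) {μ c : ℝ} (hc : ∀ k, c ≤ |hA.eigenvalues k - μ|)
    (x : EuclideanSpace ℝ m) : c * ‖x‖ ≤ ‖toEuclideanLin A x - μ • x‖ := by
  rcases le_or_gt c 0 with hc0 | hc0
  · exact (mul_nonpos_of_nonpos_of_nonneg hc0 (norm_nonneg x)).trans (norm_nonneg _)
  set b := hA.eigenvectorBasis
  have hcoord (k : m) :
      ⟪b k, toEuclideanLin A x - μ • x⟫ = (hA.eigenvalues k - μ) * ⟪b k, x⟫ := by
    have hb : toEuclideanLin A (b k) = hA.eigenvalues k • b k :=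
      congrArg (WithLp.toLp 2) (hA.mulVec_eigenvectorBasis k)
    rw [inner_sub_right, real_inner_smul_right, ← isSymmetric_toEuclideanLin_iff.mpr hA, hb,
      real_inner_smul_left, sub_mul]
  have hsq : (c * ‖x‖) ^ 2 ≤ ‖toEuclideanLin A x - μ • x‖ ^ 2 := by
    rw [mul_pow, ← b.sum_sq_inner_right, ← b.sum_sq_inner_right, Finset.mul_sum]
    refine Finset.sum_le_sum fun k _ => ?_
    rw [hcoord, mul_pow, ← sq_abs (hA.eigenvalues k - μ)]
    gcongr
    exact hc k
  exact (pow_le_pow_iff_left₀ (by positivity) (norm_nonneg _) two_ne_zero).mp hsq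

theorem Matrix.IsHermitian.exists_mem_spectrum_abs_sub_lt {m : Type*} [Fintype m]
    [DecidableEq m] {A : Matrix m m ℝ} (hA : A.IsHermitian) {μ c : ℝ} {x : EuclideanSpace ℝ m}
    (h : ‖toEuclideanLin A x - μ • x‖ < c * ‖x‖) : ∃ σ ∈ spectrum ℝ A, |σ - μ| < c := by
  by_contra! hfar
  exact (hA.mul_norm_le_norm_sub_smul (fun k => hfar _ (hA.eigenvalues_mem_spectrum_real k))
    x).not_gt h

theorem Matrix.PosDef.inv_specNorm_inv_le {d : ℕ} {A : Matrix (Fin d) (Fin d) ℝ} (hA : A.PosDef)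
    {μ : ℝ} (hμ : μ ∈ spectrum ℝ A) : (specNorm A⁻¹)⁻¹ ≤ μ := by
  rw [hA.1.spectrum_real_eq_range_eigenvalues] at hμ
  obtain ⟨k, rfl⟩ := hμ
  set v := hA.1.eigenvectorBasis k
  have hpos := hA.eigenvalues_pos k
  have : Invertible A := hA.isUnit.invertible
  have hinv : A⁻¹ *ᵥ v.ofLp = (hA.1.eigenvalues k)⁻¹ • v.ofLp := by
    refine inv_mulVec_eq_vec ?_
    rw [mulVec_smul, hA.1.mulVec_eigenvectorBasis, smul_smul, inv_mul_cancel₀ hpos.ne', one_smul]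
  have hle := (toEuclideanLin A⁻¹).toContinuousLinearMap.le_opNorm v
  rw [LinearMap.coe_toContinuousLinearMap', toLpLin_apply, hinv, WithLp.toLp_smul,
    WithLp.toLp_ofLp, norm_smul, hA.1.eigenvectorBasis.orthonormal.1 k, mul_one, mul_one,
    Real.norm_of_nonneg (inv_nonneg.mpr hpos.le)] at hle
  exact inv_le_of_inv_le₀ hpos hle

theorem lamMin_le {m : Type*} [Fintype m] [DecidableEq m] {A : Matrix m m ℝ} {σ : ℝ}
    (hσ : σ ∈ spectrum ℝ A) : lamMin A ≤ σ :=
  csInf_le finite_real_spectrum.bddBelow hσ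

theorem Matrix.PosDef.inv_specNorm_inv_le_lamMin {d : ℕ} {A : Matrix (Fin d) (Fin d) ℝ}
    (hA : A.PosDef) (hd : 0 < d) : (specNorm A⁻¹)⁻¹ ≤ lamMin A :=
  le_csInf ⟨_, hA.1.eigenvalues_mem_spectrum_real ⟨0, hd⟩⟩ fun _ => hA.inv_specNorm_inv_le

def blkVec {n d : ℕ} (v : EuclideanSpace ℝ (Fin n × Fin d)) (i : Fin n) :
    EuclideanSpace ℝ (Fin d) :=
  WithLp.toLp 2 fun a => v (i, a)

theorem sum_toEuclideanLin_blk {n d : ℕ} (S : Matrix (Fin n × Fin d) (Fin n × Fin d) ℝ)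
    (v : EuclideanSpace ℝ (Fin n × Fin d)) (i : Fin n) :
    ∑ j, toEuclideanLin (blk S i j) (blkVec v j) = blkVec (toEuclideanLin S v) i := by
  ext a
  simp [blkVec, blk, mulVec, dotProduct, Fintype.sum_prod_type]

theorem exists_norm_blk_sub_smul_le {n d : ℕ} (S : Matrix (Fin n × Fin d) (Fin n × Fin d) ℝ)
    {v : EuclideanSpace ℝ (Fin n × Fin d)} {lam : ℝ} (hv : toEuclideanLin S v = lam • v)
    (hv0 : v ≠ 0) :
    ∃ i, blkVec v i ≠ 0 ∧ ‖toEuclideanLin (blk S i i) (blkVec v i) - lam • blkVec v i‖ ≤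
      (∑ k ∈ univ \ {i}, specNorm (blk S i k)) * ‖blkVec v i‖ := by
  obtain ⟨p, hp⟩ : ∃ p, v p ≠ 0 := by
    by_contra! h
    exact hv0 (by ext p; exact h p)
  obtain ⟨i, -, hmax⟩ := univ.exists_max_image (fun j => ‖blkVec v j‖) ⟨p.1, mem_univ _⟩
  refine ⟨i, fun h0 => hp ?_, ?_⟩
  · have hp0 := hmax p.1 (mem_univ _)
    rw [h0, norm_zero, norm_le_zero_iff] at hp0
    exact congrArg (· p.2) hp0
  have hblock : toEuclideanLin (blk S i i) (blkVec v i) - lam • blkVec v i =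
      -∑ k ∈ univ \ {i}, toEuclideanLin (blk S i k) (blkVec v k) := by
    have hrow := sum_toEuclideanLin_blk S v i
    rw [sum_eq_add_sum_sdiff_singleton_of_mem (mem_univ i), hv] at hrow
    rw [← sub_eq_zero, sub_neg_eq_add, sub_add_eq_add_sub, hrow, sub_eq_zero]
    rfl
  calc ‖toEuclideanLin (blk S i i) (blkVec v i) - lam • blkVec v i‖
      ≤ ∑ k ∈ univ \ {i}, ‖toEuclideanLin (blk S i k) (blkVec v k)‖ := by
        rw [hblock, norm_neg]
        exact norm_sum_le _ _
    _ ≤ ∑ k ∈ univ \ {i}, specNorm (blk S i k) * ‖blkVec v i‖ := by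
        gcongr with k
        exact ((toEuclideanLin (blk S i k)).toContinuousLinearMap.le_opNorm _).trans
          (mul_le_mul_of_nonneg_left (hmax k (mem_univ k)) (norm_nonneg _))
    _ = _ := (sum_mul ..).symm

theorem stmt3_general {n d : ℕ} (S : Matrix (Fin n × Fin d) (Fin n × Fin d) ℝ)
    (hdiag : ∀ i, (blk S i i).PosDef)
    (hdom : ∀ i, ∑ k ∈ univ \ {i}, specNorm (blk S i k) < (specNorm (blk S i i)⁻¹)⁻¹)
    (lam : ℝ) (hlam : lam ∈ spectrum ℝ S) :
    0 < lam ∧ ∃ i, ∃ σ ∈ spectrum ℝ (blk S i i), |σ - lam| < lamMin (blk S i i) := by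
  rw [← spectrum_toLpLin 2, ← Module.End.hasEigenvalue_iff_mem_spectrum] at hlam
  obtain ⟨v, hv⟩ := hlam.exists_hasEigenvector
  obtain ⟨i, hvi, hgersh⟩ := exists_norm_blk_sub_smul_le S hv.apply_eq_smul hv.2
  have hd : 0 < d := Nat.pos_of_ne_zero fun hd => hvi (by subst hd; exact Subsingleton.elim _ _)
  have hclose : ‖toEuclideanLin (blk S i i) (blkVec v i) - lam • blkVec v i‖ <
      lamMin (blk S i i) * ‖blkVec v i‖ :=
    calc _ ≤ _ := hgersh
      _ < (specNorm (blk S i i)⁻¹)⁻¹ * ‖blkVec v i‖ :=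
        mul_lt_mul_of_pos_right (hdom i) (norm_pos_iff.mpr hvi)
      _ ≤ _ := by gcongr; exact (hdiag i).inv_specNorm_inv_le_lamMin hd
  obtain ⟨σ, hσ, hσlam⟩ := (hdiag i).1.exists_mem_spectrum_abs_sub_lt hclose
  exact ⟨by linarith [lamMin_le hσ, le_abs_self (σ - lam)], i, σ, hσ, hσlam⟩

/-- for a symmetric block matrix with SPD diagonal blocks satisfying
block strict diagonal dominance, every eigenvalue λ is positive; more precisely there
is a block i and an eigenvalue σ of Σᵢᵢ with |σ − λ| < λ_min(Σᵢᵢ). -/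
theorem stmt3 {n d : ℕ} (S : Matrix (Fin n × Fin d) (Fin n × Fin d) ℝ)
    (hsymm : S.IsSymm)
    (hdiag : ∀ i, (blk S i i).PosDef)
    (hdom : ∀ i, ∑ k ∈ univ \ {i}, specNorm (blk S i k) < (specNorm (blk S i i)⁻¹)⁻¹)
    (lam : ℝ) (hlam : lam ∈ spectrum ℝ S) :
    0 < lam ∧ ∃ i, ∃ σ ∈ spectrum ℝ (blk S i i), |σ - lam| < lamMin (blk S i i) :=
  stmt3_general S hdiag hdom lam hlam
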